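/- If π_* : S → A is a uniformly optimal stationary policy of a finite deterministic Markov decision process (i.e., v_{π_*}(x) ≤ v_π(x) for all policies π and all x ∈ S), then for every initial state x₀ ∈ S the closed-loop control sequence defined by u(t) = π_*(x(t)) with x(0) = x₀ and x(t+1) = f(x(t), u(t)) attains the infimum of the discounted cost J(x₀, u) over all action sequences u : ℕ → A. -/

import Mathlib

/-- Trajectory of a deterministic MDP: `x(0) = x₀` and `x(t+1) = f (x t) (u t)`. -/
def traj {S A : Type*} (f : S → A → S) (x0 : S) (u : ℕ → A) : ℕ → S
  | 0 => x0
  | t + 1 => f (traj f x0 u t) (u t)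

/-- Discounted cost of an action sequence from an initial state. -/
noncomputable def Jcost {S A : Type*} (f : S → A → S) (g : S → A → ℝ) (lam : ℝ)
    (x0 : S) (u : ℕ → A) : ℝ :=
  ∑' t : ℕ, lam ^ t * g (traj f x0 u t) (u t)

/-- Closed-loop trajectory under a stationary policy. -/
def ctraj {S A : Type*} (f : S → A → S) (pol : S → A) (x : S) : ℕ → S
  | 0 => x
  | t + 1 => f (ctraj f pol x t) (pol (ctraj f pol x t))

/-- Value function of a stationary policy. -/
noncomputable def vpi {S A : Type*} (f : S → A → S) (g : S → A → ℝ) (lam : ℝ)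
    (pol : S → A) (x : S) : ℝ :=
  ∑' t : ℕ, lam ^ t * g (ctraj f pol x t) (pol (ctraj f pol x t))

/-!
Let `V` be the value function of the optimal policy `π*`. Changing `π*` at a single state `x`
to an action `a` can only increase the value, and a maximum-principle argument over the finite
state space turns this into the Bellman inequality `V x ≤ g x a + λ V (f x a)`. Iterating it
along the trajectory of any action sequence `u` gives
`V x₀ ≤ ∑_{t<n} λ^t g (x t) (u t) + λ^n V (x n)`, and letting `n → ∞` yields `V x₀ ≤ J x₀ u`,
while the closed-loop control of `π*` has cost exactly `V x₀`.
-/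

open Filter Topology Finset

lemma summable_pow_mul_of_abs_le {lam M : ℝ} (h0 : 0 ≤ lam) (h1 : lam < 1) {c : ℕ → ℝ}
    (hc : ∀ t, |c t| ≤ M) : Summable fun t => lam ^ t * c t := by
  refine Summable.of_norm_bounded ((summable_geometric_of_lt_one h0 h1).mul_left M) fun t => ?_
  rw [norm_mul, norm_pow, Real.norm_eq_abs, Real.norm_eq_abs, abs_of_nonneg h0, mul_comm]
  exact mul_le_mul_of_nonneg_right (hc t) (pow_nonneg h0 t)

lemma le_zero_of_le_mul_comp {S : Type*} [Finite S] {lam : ℝ} (h0 : 0 ≤ lam) (h1 : lam < 1)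
    {d : S → ℝ} {h : S → S} (hd : ∀ y, d y ≤ lam * d (h y)) (y : S) : d y ≤ 0 := by
  have : Nonempty S := ⟨y⟩
  obtain ⟨z, hz⟩ := Finite.exists_max d
  have hdz : d z ≤ lam * d z := (hd z).trans (mul_le_mul_of_nonneg_left (hz (h z)) h0)
  nlinarith [hz y]

section DMDP

variable {S A : Type*} (f : S → A → S) (g : S → A → ℝ) {lam : ℝ}

lemma summable_pow_mul_cost [Finite S] [Finite A] (h0 : 0 ≤ lam) (h1 : lam < 1)
    (y : ℕ → S) (w : ℕ → A) : Summable fun t => lam ^ t * g (y t) (w t) := by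
  obtain ⟨M, hM⟩ := Finite.exists_le fun p : S × A => |g p.1 p.2|
  exact summable_pow_mul_of_abs_le h0 h1 fun t => hM (y t, w t)

lemma traj_eq_ctraj (pol : S → A) (x : S) :
    traj f x (fun t => pol (ctraj f pol x t)) = ctraj f pol x := by
  funext t
  induction t with
  | zero => rfl
  | succ t ih => rw [traj, ih]; rfl

lemma Jcost_eq_vpi (pol : S → A) (x : S) :
    Jcost f g lam x (fun t => pol (ctraj f pol x t)) = vpi f g lam pol x := by
  rw [Jcost, traj_eq_ctraj, vpi]

lemma ctraj_succ' (pol : S → A) (x : S) :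
    ∀ t, ctraj f pol x (t + 1) = ctraj f pol (f x (pol x)) t
  | 0 => rfl
  | t + 1 => by rw [ctraj, ctraj_succ' pol x t, ctraj]

lemma vpi_eq_cost_add [Finite S] [Finite A] (h0 : 0 ≤ lam) (h1 : lam < 1)
    (pol : S → A) (x : S) :
    vpi f g lam pol x = g x (pol x) + lam * vpi f g lam pol (f x (pol x)) := by
  rw [vpi, (summable_pow_mul_cost g h0 h1 _ _).tsum_eq_zero_add, vpi, ← tsum_mul_left, pow_zero,
    one_mul]
  congr 1
  exact tsum_congr fun t => by rw [ctraj_succ', pow_succ]; ring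

lemma vpi_le_cost_add_of_forall_vpi_le [Finite S] [Finite A] (h0 : 0 ≤ lam) (h1 : lam < 1)
    {polStar : S → A} (hopt : ∀ (pol : S → A) (x : S), vpi f g lam polStar x ≤ vpi f g lam pol x)
    (x : S) (a : A) :
    vpi f g lam polStar x ≤ g x a + lam * vpi f g lam polStar (f x a) := by
  classical
  by_contra! hlt
  set pol := Function.update polStar x a
  have hpol : pol x = a := Function.update_self x a polStar
  have hstar : ∀ y, g y (pol y) + lam * vpi f g lam polStar (f y (pol y))
      ≤ vpi f g lam polStar y := by
    intro y
    by_cases hy : y = x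
    · subst hy; rw [hpol]; exact hlt.le
    · rw [show pol y = polStar y from Function.update_of_ne hy a polStar]
      exact (vpi_eq_cost_add f g h0 h1 polStar y).ge
  have hle : ∀ y, vpi f g lam pol y - vpi f g lam polStar y ≤ 0 := by
    refine le_zero_of_le_mul_comp h0 h1 (h := fun y => f y (pol y)) fun y => ?_
    have := vpi_eq_cost_add f g h0 h1 pol y
    linarith [hstar y]
  have hx := vpi_eq_cost_add f g h0 h1 pol x
  rw [hpol] at hx
  have := mul_le_mul_of_nonneg_left (sub_nonpos.1 (hle (f x a))) h0
  linarith [hopt pol x]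

lemma le_sum_range_add_of_bellman (h0 : 0 ≤ lam) {V : S → ℝ}
    (hV : ∀ x a, V x ≤ g x a + lam * V (f x a)) (x0 : S) (u : ℕ → A) (n : ℕ) :
    V x0 ≤ ∑ t ∈ range n, lam ^ t * g (traj f x0 u t) (u t) + lam ^ n * V (traj f x0 u n) := by
  induction n with
  | zero => simp [traj]
  | succ n ih =>
    have := mul_le_mul_of_nonneg_left (hV (traj f x0 u n) (u n)) (pow_nonneg h0 n)
    rw [sum_range_succ, traj, pow_succ]
    linarith

lemma le_Jcost_of_bellman [Finite S] [Finite A] (h0 : 0 ≤ lam) (h1 : lam < 1) {V : S → ℝ}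
    (hV : ∀ x a, V x ≤ g x a + lam * V (f x a)) (x0 : S) (u : ℕ → A) :
    V x0 ≤ Jcost f g lam x0 u := by
  obtain ⟨K, hK⟩ := Finite.exists_le fun x => |V x|
  have hpartial := (summable_pow_mul_cost g h0 h1 (traj f x0 u) u).hasSum.tendsto_sum_nat
  have htail : Tendsto (fun n => lam ^ n * V (traj f x0 u n)) atTop (𝓝 0) := by
    refine squeeze_zero_norm (fun n => ?_)
      (by simpa using (tendsto_pow_atTop_nhds_zero_of_lt_one h0 h1).mul_const K)
    rw [norm_mul, norm_pow, Real.norm_eq_abs, Real.norm_eq_abs, abs_of_nonneg h0]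
    exact mul_le_mul_of_nonneg_left (hK _) (pow_nonneg h0 n)
  have hlim := hpartial.add htail
  rw [add_zero] at hlim
  exact ge_of_tendsto' hlim (le_sum_range_add_of_bellman f g h0 hV x0 u)

end DMDP

theorem optimal_policy_closed_loop_attains_infimum_general
    {S A : Type*} [Fintype S] [Fintype A]
    (f : S → A → S) (g : S → A → ℝ) (lam : ℝ) (hlam0 : 0 < lam) (hlam1 : lam < 1)
    (polStar : S → A)
    (hopt : ∀ (pol : S → A) (x : S), vpi f g lam polStar x ≤ vpi f g lam pol x)
    (x0 : S) :
    ∀ u : ℕ → A,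
      Jcost f g lam x0 (fun t => polStar (ctraj f polStar x0 t)) ≤ Jcost f g lam x0 u := by
  intro u
  rw [Jcost_eq_vpi]
  exact le_Jcost_of_bellman f g hlam0.le hlam1
    (vpi_le_cost_add_of_forall_vpi_le f g hlam0.le hlam1 hopt) x0 u

theorem optimal_policy_closed_loop_attains_infimum
    {S A : Type*} [Fintype S] [Nonempty S] [Fintype A] [Nonempty A]
    (f : S → A → S) (g : S → A → ℝ) (lam : ℝ) (hlam0 : 0 < lam) (hlam1 : lam < 1)
    (polStar : S → A)
    (hopt : ∀ (pol : S → A) (x : S), vpi f g lam polStar x ≤ vpi f g lam pol x)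
    (x0 : S) :
    ∀ u : ℕ → A,
      Jcost f g lam x0 (fun t => polStar (ctraj f polStar x0 t)) ≤ Jcost f g lam x0 u :=
  optimal_policy_closed_loop_attains_infimum_general f g lam hlam0 hlam1 polStar hopt x0
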